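/- arXiv:2307.07670 — 2 statements merged into one kernel-verified Lean document; each statement's English description precedes it below -/
import Mathlib

section
/- Let (S, (A_i)_{i=1}^m, H, P, (R_i)_{i=1}^m) be a tabular episodic Markov game satisfying Condition 1 with target policy π† and worse policy π⁻ (so Δ_min > 0). Under the d-portion attack, for every agent i, step h, state s, and joint action a with a_i ≠ π†_{i,h}(s): Q̃^{π†}_{i,h}(s, (π†_{i,h}(s), a_{-i})) − Q̃^{π†}_{i,h}(s, a) = (1/(2m))·Δ^{†−}_{i,h}(s) ≥ Δ_min/(2m), where (π†_{i,h}(s), a_{-i}) is the joint action obtained from a by replacing agent i's action with π†_{i,h}(s). -/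
open Finset

namespace MGAttack

variable {S : Type} [Fintype S] [DecidableEq S]
variable {m : ℕ} {A : Fin m → Type} [∀ i, Fintype (A i)] [∀ i, DecidableEq (A i)]

/-- `VA P f π n h s`: expected sum of `f` over `n` steps starting from step `h` in
state `s`, when joint actions are drawn from the joint pmf `π` and states evolve
according to `P`.  With `f` a mean-reward function this is the value function. -/
noncomputable def VA (P : ℕ → S → (∀ i, A i) → S → ℝ) (f : ℕ → S → (∀ i, A i) → ℝ)
    (π : ℕ → S → (∀ i, A i) → ℝ) : ℕ → ℕ → S → ℝ
  | 0, _, _ => 0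
  | n + 1, h, s => ∑ a, π h s a * (f h s a + ∑ s', P h s a s' * VA P f π n (h + 1) s')

/-- Value function `V^π_h(s)` for horizon `H` (steps `h, h+1, …, H`). -/
noncomputable def Vf (P : ℕ → S → (∀ i, A i) → S → ℝ) (R : ℕ → S → (∀ i, A i) → ℝ)
    (π : ℕ → S → (∀ i, A i) → ℝ) (H h : ℕ) (s : S) : ℝ :=
  VA P R π (H + 1 - h) h s

/-- Q-function `Q^π_h(s,a)` for horizon `H`. -/
noncomputable def Qf (P : ℕ → S → (∀ i, A i) → S → ℝ) (R : ℕ → S → (∀ i, A i) → ℝ)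
    (π : ℕ → S → (∀ i, A i) → ℝ) (H h : ℕ) (s : S) (a : ∀ i, A i) : ℝ :=
  R h s a + ∑ s', P h s a s' * VA P R π (H - h) (h + 1) s'

/-- Joint pmf of a Markov product policy. -/
noncomputable def jp (π : ∀ i : Fin m, ℕ → S → A i → ℝ) : ℕ → S → (∀ i, A i) → ℝ :=
  fun h s a => ∏ i, π i h s (a i)

/-- Joint action prescribed by a deterministic (product) policy. -/
def tgtJ (τ : ∀ i : Fin m, ℕ → S → A i) (h : ℕ) (s : S) : ∀ i, A i := fun i => τ i h s

/-- A deterministic policy viewed as a (point-mass) stochastic policy. -/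
noncomputable def detP (τ : ∀ i : Fin m, ℕ → S → A i) : ∀ i : Fin m, ℕ → S → A i → ℝ :=
  fun i h s b => if b = τ i h s then 1 else 0

/-- `P` is a transition kernel for the steps `1, …, H`. -/
def IsKernel (H : ℕ) (P : ℕ → S → (∀ i, A i) → S → ℝ) : Prop :=
  ∀ h ∈ Finset.Icc 1 H, ∀ s a, (∀ s', 0 ≤ P h s a s') ∧ ∑ s', P h s a s' = 1

/-- `π` is a Markov product policy for the steps `1, …, H`. -/
def IsPolicy (H : ℕ) (π : ∀ i : Fin m, ℕ → S → A i → ℝ) : Prop :=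
  ∀ i : Fin m, ∀ h ∈ Finset.Icc 1 H, ∀ s, (∀ b, 0 ≤ π i h s b) ∧ ∑ b, π i h s b = 1

/-- `πi` is a Markov policy for the single agent `i`. -/
def IsPolicyI (H : ℕ) {i : Fin m} (πi : ℕ → S → A i → ℝ) : Prop :=
  ∀ h ∈ Finset.Icc 1 H, ∀ s, (∀ b, 0 ≤ πi h s b) ∧ ∑ b, πi h s b = 1

/-- The mean rewards all lie in `[0,1]`. -/
def IsReward (H : ℕ) (R : Fin m → ℕ → S → (∀ i, A i) → ℝ) : Prop :=
  ∀ i, ∀ h ∈ Finset.Icc 1 H, ∀ s a, R i h s a ∈ Set.Icc (0 : ℝ) 1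

/-- `d_h(s,a) = m/2 + (1/2) ∑_i 1(a_i = π†_{i,h}(s))` of the `d`-portion attack. -/
noncomputable def dfun (τ : ∀ i : Fin m, ℕ → S → A i) (h : ℕ) (s : S) (a : ∀ i, A i) : ℝ :=
  (m : ℝ) / 2 + (∑ i, if a i = τ i h s then (1 : ℝ) else 0) / 2

/-- Post-attack mean rewards of the `d`-portion attack (target `τ`, worse policy `τ'`). -/
noncomputable def Rport (R : Fin m → ℕ → S → (∀ i, A i) → ℝ) (τ τ' : ∀ i : Fin m, ℕ → S → A i)
    (i : Fin m) : ℕ → S → (∀ i, A i) → ℝ :=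
  fun h s a => (dfun τ h s a / m) * R i h s (tgtJ τ h s)
    + (1 - dfun τ h s a / m) * R i h s (tgtJ τ' h s)

/-- Post-attack transition probabilities of the `d`-portion attack. -/
noncomputable def Pport (P : ℕ → S → (∀ i, A i) → S → ℝ) (τ τ' : ∀ i : Fin m, ℕ → S → A i) :
    ℕ → S → (∀ i, A i) → S → ℝ :=
  fun h s a s' => (dfun τ h s a / m) * P h s (tgtJ τ h s) s'
    + (1 - dfun τ h s a / m) * P h s (tgtJ τ' h s) s'

/-- `Δ^{†−}_{i,h}(s) = Q^{π†}_{i,h}(s, π†_h(s)) − Q^{π†}_{i,h}(s, π⁻_h(s))` (original game). -/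
noncomputable def Δdag (P : ℕ → S → (∀ i, A i) → S → ℝ) (R : Fin m → ℕ → S → (∀ i, A i) → ℝ)
    (τ τ' : ∀ i : Fin m, ℕ → S → A i) (H : ℕ) (i : Fin m) (h : ℕ) (s : S) : ℝ :=
  Qf P (R i) (jp (detP τ)) H h s (tgtJ τ h s) - Qf P (R i) (jp (detP τ)) H h s (tgtJ τ' h s)

/-- Post-attack mean rewards of the `η`-gap attack; `ΔR i` is the reward spread of agent `i`. -/
noncomputable def Rgap (R : Fin m → ℕ → S → (∀ i, A i) → ℝ) (τ : ∀ i : Fin m, ℕ → S → A i)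
    (η : ℝ) (ΔR : Fin m → ℝ) (H : ℕ) (i : Fin m) : ℕ → S → (∀ i, A i) → ℝ :=
  fun h s a =>
    if a = tgtJ τ h s then R i h s a
    else R i h s (tgtJ τ h s) - (η + ((H - h : ℕ) : ℝ) * ΔR i) * (if a i = τ i h s then 0 else 1)

/-- Post-attack mean rewards of the mixed attack. -/
noncomputable def Rmix (R : Fin m → ℕ → S → (∀ i, A i) → ℝ) (τ : ∀ i : Fin m, ℕ → S → A i)
    (i : Fin m) : ℕ → S → (∀ i, A i) → ℝ :=
  fun h s a => (if a i = τ i h s then (1 : ℝ) else 0) * R i h s (tgtJ τ h s)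

/-- Post-attack transition probabilities of the mixed attack. -/
def Pmix (P : ℕ → S → (∀ i, A i) → S → ℝ) (τ : ∀ i : Fin m, ℕ → S → A i) :
    ℕ → S → (∀ i, A i) → S → ℝ :=
  fun h s a s' => P h s (tgtJ τ h s) s'

/-- Probability of being in state `s'` after `n` steps, starting from `(h, s)` and following
the deterministic policy `τ` under the transitions `P`. -/
noncomputable def reach (P : ℕ → S → (∀ i, A i) → S → ℝ) (τ : ∀ i : Fin m, ℕ → S → A i) :
    ℕ → ℕ → S → S → ℝ
  | 0, _, s, s' => if s' = s then 1 else 0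
  | n + 1, h, s, s' => ∑ t, P h s (tgtJ τ h s) t * reach P τ n (h + 1) t s'

/-- Expected sum of a state-dependent function along the Markov chain `Ps`. -/
noncomputable def SSum (Ps : ℕ → S → S → ℝ) (f : ℕ → S → ℝ) : ℕ → ℕ → S → ℝ
  | 0, _, _ => 0
  | n + 1, h, s => f h s + ∑ s', Ps h s s' * SSum Ps f n (h + 1) s'

end MGAttack

namespace MGAttack

section Aux

variable {S : Type} [Fintype S] [DecidableEq S]
variable {m : ℕ} {A : Fin m → Type} [∀ i, Fintype (A i)] [∀ i, DecidableEq (A i)]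

lemma jp_detP (τ : ∀ i : Fin m, ℕ → S → A i) (h : ℕ) (s : S) (a : ∀ i, A i) :
    jp (detP τ) h s a = if a = tgtJ τ h s then 1 else 0 := by
  unfold jp detP tgtJ
  by_cases hA : a = fun i => τ i h s
  · subst hA; simp
  · rw [if_neg hA]
    obtain ⟨j, hj⟩ : ∃ j, a j ≠ τ j h s := by
      by_contra hc; push_neg at hc; exact hA (funext hc)
    exact Finset.prod_eq_zero (Finset.mem_univ j) (by simp [hj])

lemma dfun_tgt (τ : ∀ i : Fin m, ℕ → S → A i) (h : ℕ) (s : S) :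
    dfun τ h s (tgtJ τ h s) = (m : ℝ) := by
  unfold dfun tgtJ
  simp [Finset.sum_const]

lemma VA_port (P : ℕ → S → (∀ i, A i) → S → ℝ) (R : Fin m → ℕ → S → (∀ i, A i) → ℝ)
    (τ τ' : ∀ i : Fin m, ℕ → S → A i) (i : Fin m) (hm : (m : ℝ) ≠ 0)
    (n h : ℕ) (s : S) :
    VA (Pport P τ τ') (Rport R τ τ' i) (jp (detP τ)) n h s
      = VA P (R i) (jp (detP τ)) n h s := by
  induction n generalizing h s with
  | zero => rfl
  | succ n ih =>
    simp only [VA]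
    refine Finset.sum_congr rfl fun a _ => ?_
    rw [jp_detP]
    by_cases ha : a = tgtJ τ h s
    · subst ha
      rw [if_pos rfl, one_mul, one_mul]
      have hR' : Rport R τ τ' i h s (tgtJ τ h s) = R i h s (tgtJ τ h s) := by
        unfold Rport; rw [dfun_tgt, div_self hm]; ring
      have hP' : ∀ s', Pport P τ τ' h s (tgtJ τ h s) s' = P h s (tgtJ τ h s) s' := by
        intro s'; unfold Pport; rw [dfun_tgt, div_self hm]; ring
      rw [hR']
      congr 1
      exact Finset.sum_congr rfl fun s' _ => by rw [hP', ih]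
    · rw [if_neg ha, zero_mul, zero_mul]

lemma Qf_port (P : ℕ → S → (∀ i, A i) → S → ℝ) (R : Fin m → ℕ → S → (∀ i, A i) → ℝ)
    (τ τ' : ∀ i : Fin m, ℕ → S → A i) (i : Fin m) (hm : (m : ℝ) ≠ 0)
    (H h : ℕ) (s : S) (b : ∀ j, A j) :
    Qf (Pport P τ τ') (Rport R τ τ' i) (jp (detP τ)) H h s b
      = (dfun τ h s b / m) * Qf P (R i) (jp (detP τ)) H h s (tgtJ τ h s)
        + (1 - dfun τ h s b / m) * Qf P (R i) (jp (detP τ)) H h s (tgtJ τ' h s) := by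
  unfold Qf
  simp only [VA_port P R τ τ' i hm]
  unfold Rport Pport
  simp only [add_mul]
  rw [Finset.sum_add_distrib]
  simp only [mul_assoc]
  rw [← Finset.mul_sum, ← Finset.mul_sum]
  ring

end Aux

/-- Under Condition 1 and the `d`-portion attack: for every agent `i` and every joint action
`a` with `a_i ≠ π†_{i,h}(s)`, switching agent `i`'s action to the target action increases the
post-attack Q-value of `π†` by exactly `Δ^{†−}_{i,h}(s)/(2m) ≥ Δ_min/(2m)`. -/
theorem stmt4 {S : Type} [Fintype S] [DecidableEq S]
    {m : ℕ} {A : Fin m → Type} [∀ i, Fintype (A i)] [∀ i, DecidableEq (A i)]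
    (H : ℕ) (hH : 1 ≤ H) (hm : 1 ≤ m)
    (P : ℕ → S → (∀ i, A i) → S → ℝ) (hP : IsKernel H P)
    (R : Fin m → ℕ → S → (∀ i, A i) → ℝ) (hR : IsReward H R)
    (τ τ' : ∀ i : Fin m, ℕ → S → A i)
    -- Condition 1
    (hcond : ∀ i : Fin m, ∀ h ∈ Finset.Icc 1 H, ∀ s : S, 0 < Δdag P R τ τ' H i h s)
    (Δmin : ℝ)
    (hΔmin : IsLeast {x : ℝ | ∃ i : Fin m, ∃ h ∈ Finset.Icc 1 H, ∃ s : S,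
        x = Δdag P R τ τ' H i h s} Δmin)
    (i : Fin m) (h : ℕ) (hh : h ∈ Finset.Icc 1 H) (s : S) (a : ∀ j, A j)
    (hai : a i ≠ τ i h s) :
    Qf (Pport P τ τ') (Rport R τ τ' i) (jp (detP τ)) H h s (Function.update a i (τ i h s))
        - Qf (Pport P τ τ') (Rport R τ τ' i) (jp (detP τ)) H h s a
      = (1 / (2 * m)) * Δdag P R τ τ' H i h s
    ∧ Δmin / (2 * m) ≤ (1 / (2 * m)) * Δdag P R τ τ' H i h s := by
  have hmR : (m : ℝ) ≠ 0 := Nat.cast_ne_zero.mpr (by omega)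
  have hsum : ∑ j, (if Function.update a i (τ i h s) j = τ j h s then (1 : ℝ) else 0)
      = (∑ j, if a j = τ j h s then (1 : ℝ) else 0) + 1 := by
    rw [← Finset.sum_erase_add _ _ (Finset.mem_univ i),
      ← Finset.sum_erase_add _ _ (Finset.mem_univ i),
      Function.update_self, if_pos rfl, if_neg hai, add_zero]
    congr 1
    exact Finset.sum_congr rfl fun j hj => by
      rw [Function.update_of_ne (Finset.ne_of_mem_erase hj)]
  have hd : dfun τ h s (Function.update a i (τ i h s)) = dfun τ h s a + 1 / 2 := by
    unfold dfun; rw [hsum]; ring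
  constructor
  · rw [Qf_port P R τ τ' i hmR, Qf_port P R τ τ' i hmR, hd]
    unfold Δdag
    field_simp
    ring
  · have hmem : Δdag P R τ τ' H i h s ∈ {x : ℝ | ∃ i : Fin m, ∃ h ∈ Finset.Icc 1 H, ∃ s : S,
        x = Δdag P R τ τ' H i h s} := ⟨i, h, hh, s, rfl⟩
    have hle : Δmin ≤ Δdag P R τ τ' H i h s := hΔmin.2 hmem
    have h2m : (0 : ℝ) < 2 * m := by positivity
    have heq : (1 / (2 * m) : ℝ) * Δdag P R τ τ' H i h s
        = Δdag P R τ τ' H i h s / (2 * m) := by ring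
    rw [heq]
    exact (div_le_div_iff_of_pos_right h2m).mpr hle

end MGAttack
end

section
/- Let (S, (A_i)_{i=1}^m, H, P, (R_i)_{i=1}^m) be a tabular episodic Markov game satisfying Condition 2 with target policy π† and gap η > 0. Under the η-gap attack, for every agent i, every Markov product policy π, and every initial state s₁: Ṽ^{π†_i × π_{-i}}_{i,1}(s₁) − Ṽ^{π}_{i,1}(s₁) ≥ η · E[ ∑_{h=1}^H 1(a_{i,h} ≠ π†_{i,h}(s_h)) ] ≥ 0, where the expectation is over trajectories generated under π with transitions P started at s₁. -/
open Finset

/-!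
Write `r h s = R_i(h, s, π†_h(s))` and `D` for the indicator that agent `i` leaves its target
action. The attacked reward is `r - (η + (H - h) ΔR) D`, so `Ṽ^π + η E[∑ D]` is the value under
`π` of `r - (H - h) ΔR D`, whereas agent `i` playing `π†_i` collects exactly `r` at every step.
Backward induction compares the two step by step, the other agents' actions having the same
distribution in both: when agent `i` deviates at step `h` it pays `(H - h) ΔR`, which covers any
difference between two sums of `H - h` rewards in `[Rmin, Rmax]`.
-/

theorem Fintype.sum_mul_sum_apply_mul_of_update_invariant {ι R : Type*} [Fintype ι] [DecidableEq ι]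
    [CommSemiring R] {A : ι → Type*} [∀ j, Fintype (A j)] (i : ι) (w w' : A i → R)
    (F : (∀ j, A j) → R) (hF : ∀ a b, F (Function.update a i b) = F a) :
    (∑ b, w' b) * ∑ a, w (a i) * F a = (∑ b, w b) * ∑ a, w' (a i) * F a := by
  -- `(a, b) ↦ (update a i b, a i)` is an involution exchanging the roles of `w` and `w'`
  let e : (∀ j, A j) × A i ≃ (∀ j, A j) × A i :=
    Function.Involutive.toPerm (fun p => (Function.update p.1 i p.2, p.1 i)) fun p => by simp
  calc (∑ b, w' b) * ∑ a, w (a i) * F a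
      = ∑ a, ∑ b, w (a i) * w' b * F (Function.update a i b) := by
        rw [Finset.sum_mul_sum, Finset.sum_comm]
        simp only [hF]
        exact Finset.sum_congr rfl fun _ _ => Finset.sum_congr rfl fun _ _ => by ring
    _ = ∑ p : (∀ j, A j) × A i, w p.2 * w' (p.1 i) * F p.1 := by
        rw [← Fintype.sum_prod_type']
        conv_rhs => rw [← e.sum_comp]
        refine Finset.sum_congr rfl fun p _ => ?_
        simp only [show e p = (Function.update p.1 i p.2, p.1 i) from rfl, Function.update_self]
    _ = (∑ b, w b) * ∑ a, w' (a i) * F a := by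
        rw [Fintype.sum_prod_type, Finset.sum_mul_sum, Finset.sum_comm]
        exact Finset.sum_congr rfl fun _ _ => Finset.sum_congr rfl fun _ _ => by ring

namespace MGAttack

variable {S : Type} {m : ℕ} {A : Fin m → Type}

def IsJointPolicy [∀ i, Fintype (A i)] (H : ℕ) (πj : ℕ → S → (∀ i, A i) → ℝ) : Prop :=
  ∀ h ∈ Finset.Icc 1 H, ∀ s, (∀ a, 0 ≤ πj h s a) ∧ ∑ a, πj h s a = 1

def deviation [∀ i, DecidableEq (A i)] (τ : ∀ i : Fin m, ℕ → S → A i) (i : Fin m) (h : ℕ)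
    (s : S) (a : ∀ j, A j) : ℝ :=
  if a i = τ i h s then 0 else 1

theorem deviation_nonneg [∀ i, DecidableEq (A i)] (τ : ∀ i : Fin m, ℕ → S → A i) (i : Fin m)
    (h : ℕ) (s : S) (a : ∀ j, A j) : 0 ≤ deviation τ i h s a := by
  unfold deviation
  split_ifs <;> norm_num

theorem Rgap_apply [∀ i, DecidableEq (A i)] (R : Fin m → ℕ → S → (∀ i, A i) → ℝ)
    (τ : ∀ i : Fin m, ℕ → S → A i) (η : ℝ) (ΔR : Fin m → ℝ) (H : ℕ) (i : Fin m) (h : ℕ) (s : S)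
    (a : ∀ j, A j) :
    Rgap R τ η ΔR H i h s a
      = R i h s (tgtJ τ h s) - (η + ((H - h : ℕ) : ℝ) * ΔR i) * deviation τ i h s a := by
  unfold Rgap deviation
  split_ifs with ha hai hai
  · rw [ha]; ring
  · exact absurd (congrFun ha i) hai
  · rfl
  · rfl

theorem IsKernel.sum_mul_mono [Fintype S] {H h : ℕ} {P : ℕ → S → (∀ i, A i) → S → ℝ}
    (hP : IsKernel H P) (hh : h ∈ Finset.Icc 1 H) (s : S) (a : ∀ i, A i)
    {V V' : S → ℝ} (hV : ∀ s', V s' ≤ V' s') :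
    ∑ s', P h s a s' * V s' ≤ ∑ s', P h s a s' * V' s' :=
  Finset.sum_le_sum fun s' _ => mul_le_mul_of_nonneg_left (hV s') ((hP h hh s a).1 s')

theorem IsKernel.sum_mul_const [Fintype S] {H h : ℕ} {P : ℕ → S → (∀ i, A i) → S → ℝ}
    (hP : IsKernel H P) (hh : h ∈ Finset.Icc 1 H) (s : S) (a : ∀ i, A i) (c : ℝ) :
    ∑ s', P h s a s' * c = c := by
  rw [← Finset.sum_mul, (hP h hh s a).2, one_mul]

section Value

variable [Fintype S] [∀ i, Fintype (A i)]
variable {P : ℕ → S → (∀ i, A i) → S → ℝ} {πj : ℕ → S → (∀ i, A i) → ℝ}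

@[simp]
theorem VA_zero (f : ℕ → S → (∀ i, A i) → ℝ) (h : ℕ) (s : S) : VA P f πj 0 h s = 0 := rfl

theorem VA_succ (f : ℕ → S → (∀ i, A i) → ℝ) (n h : ℕ) (s : S) :
    VA P f πj (n + 1) h s
      = ∑ a, πj h s a * (f h s a + ∑ s', P h s a s' * VA P f πj n (h + 1) s') := rfl

theorem VA_add_mul (f₁ f₂ : ℕ → S → (∀ i, A i) → ℝ) (c : ℝ) (n h : ℕ) (s : S) :
    VA P (fun g t a => f₁ g t a + c * f₂ g t a) πj n h s
      = VA P f₁ πj n h s + c * VA P f₂ πj n h s := by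
  induction n generalizing h s with
  | zero => simp
  | succ n ih =>
    rw [VA_succ, VA_succ, VA_succ, Finset.mul_sum, ← Finset.sum_add_distrib]
    refine Finset.sum_congr rfl fun a _ => ?_
    have hnext : ∑ s', P h s a s' * VA P (fun g t a => f₁ g t a + c * f₂ g t a) πj n (h + 1) s'
        = ∑ s', P h s a s' * VA P f₁ πj n (h + 1) s'
          + c * ∑ s', P h s a s' * VA P f₂ πj n (h + 1) s' := by
      rw [Finset.mul_sum, ← Finset.sum_add_distrib]
      exact Finset.sum_congr rfl fun s' _ => by rw [ih]; ring
    rw [hnext]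
    ring

theorem VA_congr {f f' : ℕ → S → (∀ i, A i) → ℝ}
    (hf : ∀ g t a, πj g t a ≠ 0 → f g t a = f' g t a) (n h : ℕ) (s : S) :
    VA P f πj n h s = VA P f' πj n h s := by
  induction n generalizing h s with
  | zero => rfl
  | succ n ih =>
    simp only [VA_succ, ih]
    refine Finset.sum_congr rfl fun a _ => ?_
    rcases eq_or_ne (πj h s a) 0 with h0 | h0
    · simp [h0]
    · rw [hf h s a h0]

variable {H : ℕ}

theorem VA_mono (hP : IsKernel H P) (hπ : IsJointPolicy H πj) {f f' : ℕ → S → (∀ i, A i) → ℝ}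
    (hf : ∀ g ∈ Finset.Icc 1 H, ∀ t a, f g t a ≤ f' g t a) (n h : ℕ) (s : S) (h1 : 1 ≤ h)
    (hn : h + n ≤ H + 1) : VA P f πj n h s ≤ VA P f' πj n h s := by
  induction n generalizing h s with
  | zero => rfl
  | succ n ih =>
    have hh : h ∈ Finset.Icc 1 H := Finset.mem_Icc.2 ⟨h1, by omega⟩
    refine Finset.sum_le_sum fun a _ => mul_le_mul_of_nonneg_left ?_ ((hπ h hh s).1 a)
    exact add_le_add (hf h hh s a)
      (hP.sum_mul_mono hh s a fun s' => ih (h + 1) s' (by omega) (by omega))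

theorem VA_const (hP : IsKernel H P) (hπ : IsJointPolicy H πj) (c : ℝ) (n h : ℕ) (s : S)
    (h1 : 1 ≤ h) (hn : h + n ≤ H + 1) : VA P (fun _ _ _ => c) πj n h s = n * c := by
  induction n generalizing h s with
  | zero => simp
  | succ n ih =>
    have hh : h ∈ Finset.Icc 1 H := Finset.mem_Icc.2 ⟨h1, by omega⟩
    simp only [VA_succ, ih (h + 1) _ (by omega) (by omega), hP.sum_mul_const hh s,
      ← Finset.sum_mul, (hπ h hh s).2]
    push_cast
    ring

theorem VA_le_mul (hP : IsKernel H P) (hπ : IsJointPolicy H πj) {f : ℕ → S → (∀ i, A i) → ℝ}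
    {c : ℝ} (hf : ∀ g ∈ Finset.Icc 1 H, ∀ t a, f g t a ≤ c) (n h : ℕ) (s : S) (h1 : 1 ≤ h)
    (hn : h + n ≤ H + 1) : VA P f πj n h s ≤ n * c :=
  (VA_mono hP hπ hf n h s h1 hn).trans_eq (VA_const hP hπ c n h s h1 hn)

theorem mul_le_VA (hP : IsKernel H P) (hπ : IsJointPolicy H πj) {f : ℕ → S → (∀ i, A i) → ℝ}
    {c : ℝ} (hf : ∀ g ∈ Finset.Icc 1 H, ∀ t a, c ≤ f g t a) (n h : ℕ) (s : S) (h1 : 1 ≤ h)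
    (hn : h + n ≤ H + 1) : n * c ≤ VA P f πj n h s :=
  (VA_const hP hπ c n h s h1 hn).symm.trans_le (VA_mono hP hπ hf n h s h1 hn)

end Value

section Policy

variable {H : ℕ} {π : ∀ j : Fin m, ℕ → S → A j → ℝ}

theorem IsPolicy.isJointPolicy_jp [∀ i, Fintype (A i)] (hπ : IsPolicy H π) :
    IsJointPolicy H (jp π) := by
  intro g hg s
  refine ⟨fun a => Finset.prod_nonneg fun j _ => (hπ j g hg s).1 (a j), ?_⟩
  unfold jp
  rw [← Fintype.piFinset_univ, ← Finset.prod_univ_sum]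
  exact Finset.prod_eq_one fun j _ => (hπ j g hg s).2

theorem IsPolicy.update_detP [∀ i, Fintype (A i)] [∀ i, DecidableEq (A i)] (hπ : IsPolicy H π)
    (τ : ∀ j : Fin m, ℕ → S → A j) (i : Fin m) :
    IsPolicy H (Function.update π i (detP τ i)) := by
  intro j g hg s
  rcases eq_or_ne j i with rfl | hj
  · rw [Function.update_self]
    exact ⟨fun b => by unfold detP; split_ifs <;> norm_num, by simp [detP]⟩
  · rw [Function.update_of_ne hj]
    exact hπ j g hg s

theorem jp_update_detP_eq_zero [∀ i, DecidableEq (A i)] (τ : ∀ j : Fin m, ℕ → S → A j)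
    {i : Fin m} {g : ℕ} {s : S} {a : ∀ j, A j} (ha : a i ≠ τ i g s) :
    jp (Function.update π i (detP τ i)) g s a = 0 :=
  Finset.prod_eq_zero (Finset.mem_univ i) (by simp [detP, ha])

theorem jp_eq_mul_prod_erase (i : Fin m) (h : ℕ) (s : S) (a : ∀ j, A j) :
    jp π h s a = π i h s (a i) * ∏ j ∈ Finset.univ.erase i, π j h s (a j) :=
  (Finset.mul_prod_erase _ _ (Finset.mem_univ i)).symm

/-- Switching agent `i` to `τ i` leaves the joint distribution of the other agents' actions
unchanged. -/
theorem sum_jp_update_detP_mul [∀ i, Fintype (A i)] [∀ i, DecidableEq (A i)]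
    (τ : ∀ j : Fin m, ℕ → S → A j) (i : Fin m) (h : ℕ) (s : S)
    (hsum : ∑ b, π i h s b = 1) (G : (∀ j, A j) → ℝ) :
    ∑ a, jp (Function.update π i (detP τ i)) h s a * G a
      = ∑ a, jp π h s a * G (Function.update a i (τ i h s)) := by
  set Q : (∀ j, A j) → ℝ := fun a => ∏ j ∈ Finset.univ.erase i, π j h s (a j)
  set F : (∀ j, A j) → ℝ := fun a => Q a * G (Function.update a i (τ i h s))
  have hF : ∀ a b, F (Function.update a i b) = F a := by
    intro a b
    simp only [F, Q, Function.update_idem]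
    congr 1
    exact Finset.prod_congr rfl fun j hj => by
      rw [Function.update_of_ne (Finset.ne_of_mem_erase hj)]
  have hdetP : ∑ b, detP τ i h s b = 1 := by simp [detP]
  have hswap := Fintype.sum_mul_sum_apply_mul_of_update_invariant i (detP τ i h s) (π i h s) F hF
  rw [hsum, hdetP, one_mul, one_mul] at hswap
  calc ∑ a, jp (Function.update π i (detP τ i)) h s a * G a
      = ∑ a, detP τ i h s (a i) * F a := by
        refine Finset.sum_congr rfl fun a _ => ?_
        rw [jp_eq_mul_prod_erase i, Function.update_self]
        by_cases ha : a i = τ i h s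
        · simp only [F, Q, ← ha, Function.update_eq_self]
          rw [Finset.prod_congr rfl fun j hj => by
            rw [Function.update_of_ne (Finset.ne_of_mem_erase hj)]]
          ring
        · simp [detP, ha]
    _ = ∑ a, jp π h s a * G (Function.update a i (τ i h s)) := by
        rw [hswap]
        exact Finset.sum_congr rfl fun a _ => by rw [jp_eq_mul_prod_erase i, mul_assoc]

end Policy

theorem VA_sub_deviation_le_VA_update [Fintype S] [∀ i, Fintype (A i)]
    [∀ i, DecidableEq (A i)] {H : ℕ} {P : ℕ → S → (∀ i, A i) → S → ℝ}
    (hP : IsKernel H P) {π : ∀ j : Fin m, ℕ → S → A j → ℝ} (hπ : IsPolicy H π)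
    (τ : ∀ j : Fin m, ℕ → S → A j) (i : Fin m) {r : ℕ → S → ℝ} {lo hi : ℝ}
    (hlo : ∀ g ∈ Finset.Icc 1 H, ∀ t, lo ≤ r g t) (hhi : ∀ g ∈ Finset.Icc 1 H, ∀ t, r g t ≤ hi)
    (n h : ℕ) (s : S) (h1 : 1 ≤ h) (hn : h + n = H + 1) :
    VA P (fun g t a => r g t - ((H - g : ℕ) : ℝ) * (hi - lo) * deviation τ i g t a) (jp π) n h s
      ≤ VA P (fun g t _ => r g t) (jp (Function.update π i (detP τ i))) n h s := by
  induction n generalizing h s with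
  | zero => rfl
  | succ n ih =>
    have hh : h ∈ Finset.Icc 1 H := Finset.mem_Icc.2 ⟨h1, by omega⟩
    have hHh : H - h = n := by omega
    rw [VA_succ, VA_succ, sum_jp_update_detP_mul τ i h s (hπ i h hh s).2]
    refine Finset.sum_le_sum fun a _ => mul_le_mul_of_nonneg_left ?_
      ((hπ.isJointPolicy_jp h hh s).1 a)
    by_cases ha : a i = τ i h s
    · have hdev : deviation τ i h s a = 0 := if_pos ha
      rw [← ha, Function.update_eq_self]
      simp only [hdev, mul_zero, sub_zero]
      exact add_le_add le_rfl
        (hP.sum_mul_mono hh s a fun s' => ih (h + 1) s' (by omega) (by omega))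
    · -- the charge `n * (hi - lo)` exceeds any difference of `n`-step continuation values
      have hpen : ∀ g ∈ Finset.Icc 1 H, ∀ t a,
          r g t - ((H - g : ℕ) : ℝ) * (hi - lo) * deviation τ i g t a ≤ hi := fun g hg t a => by
        have := mul_nonneg (mul_nonneg (Nat.cast_nonneg (H - g))
          (sub_nonneg.2 ((hlo g hg t).trans (hhi g hg t)))) (deviation_nonneg τ i g t a)
        linarith [hhi g hg t]
      have hdev_cont : ∑ s', P h s a s' * VA P (fun g t a =>
            r g t - ((H - g : ℕ) : ℝ) * (hi - lo) * deviation τ i g t a) (jp π) n (h + 1) s'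
          ≤ n * hi :=
        (hP.sum_mul_mono hh s a fun s' => VA_le_mul hP hπ.isJointPolicy_jp hpen n (h + 1) s'
          (by omega) (by omega)).trans_eq (hP.sum_mul_const hh s a _)
      have htgt_cont : n * lo ≤ ∑ s', P h s (Function.update a i (τ i h s)) s'
          * VA P (fun g t _ => r g t) (jp (Function.update π i (detP τ i))) n (h + 1) s' :=
        (hP.sum_mul_const hh s _ _).symm.trans_le (hP.sum_mul_mono hh s _ fun s' =>
          mul_le_VA hP (hπ.update_detP τ i).isJointPolicy_jp (fun g hg t _ => hlo g hg t) n
            (h + 1) s' (by omega) (by omega))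
      have hdev : deviation τ i h s a = 1 := if_neg ha
      simp only [hdev, mul_one, hHh]
      linarith

theorem stmt10_general {S : Type} [Fintype S]
    {m : ℕ} {A : Fin m → Type} [∀ i, Fintype (A i)] [∀ i, DecidableEq (A i)]
    (H : ℕ)
    (P : ℕ → S → (∀ i, A i) → S → ℝ) (hP : IsKernel H P)
    (R : Fin m → ℕ → S → (∀ i, A i) → ℝ)
    (τ : ∀ i : Fin m, ℕ → S → A i) (η : ℝ)
    (Rmax Rmin : Fin m → ℝ)
    (hmax : ∀ i : Fin m, IsGreatest
      {x : ℝ | ∃ h ∈ Finset.Icc 1 H, ∃ s : S, ∃ a : ∀ j, A j, x = R i h s a} (Rmax i))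
    (hmin : ∀ i : Fin m, IsLeast
      {x : ℝ | ∃ h ∈ Finset.Icc 1 H, ∃ s : S, ∃ a : ∀ j, A j, x = R i h s a} (Rmin i))
    (π : ∀ j : Fin m, ℕ → S → A j → ℝ) (hπ : IsPolicy H π) (i : Fin m) (s₁ : S) :
    η * VA P (fun h s a => if a i = τ i h s then (0 : ℝ) else 1) (jp π) H 1 s₁
        ≤ Vf P (Rgap R τ η (fun j => Rmax j - Rmin j) H i)
            (jp (Function.update π i (detP τ i))) H 1 s₁
          - Vf P (Rgap R τ η (fun j => Rmax j - Rmin j) H i) (jp π) H 1 s₁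
    ∧ 0 ≤ VA P (fun h s a => if a i = τ i h s then (0 : ℝ) else 1) (jp π) H 1 s₁ := by
  set Rt := Rgap R τ η (fun j => Rmax j - Rmin j) H i
  have hhi : ∀ g ∈ Finset.Icc 1 H, ∀ t, R i g t (tgtJ τ g t) ≤ Rmax i :=
    fun g hg t => (hmax i).2 ⟨g, hg, t, _, rfl⟩
  have hlo : ∀ g ∈ Finset.Icc 1 H, ∀ t, Rmin i ≤ R i g t (tgtJ τ g t) :=
    fun g hg t => (hmin i).2 ⟨g, hg, t, _, rfl⟩
  have hswitch : VA P Rt (jp (Function.update π i (detP τ i))) H 1 s₁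
      = VA P (fun g t _ => R i g t (tgtJ τ g t)) (jp (Function.update π i (detP τ i))) H 1 s₁ :=
    VA_congr (fun g t a ha => by
      have hdev : deviation τ i g t a = 0 :=
        if_pos (not_not.1 fun h => ha (jp_update_detP_eq_zero τ h))
      simp only [Rt, Rgap_apply, hdev, mul_zero, sub_zero]) H 1 s₁
  have hgap : (fun g t a => Rt g t a + η * deviation τ i g t a) = fun g t a =>
      R i g t (tgtJ τ g t) - ((H - g : ℕ) : ℝ) * (Rmax i - Rmin i) * deviation τ i g t a := by
    funext g t a
    simp only [Rt, Rgap_apply]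
    ring
  have hsplit := VA_add_mul (P := P) (πj := jp π) Rt (deviation τ i) η H 1 s₁
  rw [hgap] at hsplit
  have hcmp := VA_sub_deviation_le_VA_update hP hπ τ i hlo hhi H 1 s₁ le_rfl (by omega)
  refine ⟨?_, (mul_zero _).symm.trans_le (mul_le_VA hP hπ.isJointPolicy_jp
    (fun g _ t a => deviation_nonneg τ i g t a) H 1 s₁ le_rfl (by omega))⟩
  rw [Vf, Vf, Nat.add_sub_cancel, hswitch]
  change η * VA P (deviation τ i) (jp π) H 1 s₁ ≤ _
  linarith

/-- Under Condition 2 and the `η`-gap attack, for every agent `i`, Markov product policy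
`π` and initial state `s₁`, the post-attack value gain of unilaterally switching agent `i`
to `π†_i` is at least `η` times the expected number of steps on which agent `i` deviates
from the target action (and this expectation is nonnegative). -/
theorem stmt10 {S : Type} [Fintype S] [DecidableEq S]
    {m : ℕ} {A : Fin m → Type} [∀ i, Fintype (A i)] [∀ i, DecidableEq (A i)]
    (H : ℕ) (hH : 1 ≤ H) (hm : 1 ≤ m)
    (P : ℕ → S → (∀ i, A i) → S → ℝ) (hP : IsKernel H P)
    (R : Fin m → ℕ → S → (∀ i, A i) → ℝ) (hR : IsReward H R)
    (τ : ∀ i : Fin m, ℕ → S → A i) (η : ℝ) (hη : 0 < η)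
    (Rmax Rmin : Fin m → ℝ)
    (hmax : ∀ i : Fin m, IsGreatest
      {x : ℝ | ∃ h ∈ Finset.Icc 1 H, ∃ s : S, ∃ a : ∀ j, A j, x = R i h s a} (Rmax i))
    (hmin : ∀ i : Fin m, IsLeast
      {x : ℝ | ∃ h ∈ Finset.Icc 1 H, ∃ s : S, ∃ a : ∀ j, A j, x = R i h s a} (Rmin i))
    -- Condition 2
    (hcond2 : ∀ i : Fin m, ∀ h ∈ Finset.Icc 1 H, ∀ s : S,
      ((H - h : ℕ) : ℝ) * (Rmax i - Rmin i) ≤ R i h s (tgtJ τ h s) - η)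
    (π : ∀ j : Fin m, ℕ → S → A j → ℝ) (hπ : IsPolicy H π) (i : Fin m) (s₁ : S) :
    η * VA P (fun h s a => if a i = τ i h s then (0 : ℝ) else 1) (jp π) H 1 s₁
        ≤ Vf P (Rgap R τ η (fun j => Rmax j - Rmin j) H i)
            (jp (Function.update π i (detP τ i))) H 1 s₁
          - Vf P (Rgap R τ η (fun j => Rmax j - Rmin j) H i) (jp π) H 1 s₁
    ∧ 0 ≤ VA P (fun h s a => if a i = τ i h s then (0 : ℝ) else 1) (jp π) H 1 s₁ :=
  stmt10_general H P hP R τ η Rmax Rmin hmax hmin π hπ i s₁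

end MGAttack
end
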